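/- Suppose G0 and G1 are Borel probability measures on ℝ with mean zero and variance bounded by V, and let σ > 0. Then the Bayes risk of the G1-posterior-mean rule under G0 satisfies R(G1, σ; G0) ≤ 14V + 8σ². -/

import Mathlib

open MeasureTheory Real Set

/-- The `N(0, σ²)` density `φ_σ(t) = (2πσ²)^{-1/2} exp(-t²/(2σ²))`. -/
noncomputable def gaussDens (σ t : ℝ) : ℝ :=
  (Real.sqrt (2 * Real.pi * σ ^ 2))⁻¹ * Real.exp (-t ^ 2 / (2 * σ ^ 2))

/-- Marginal density `f_{G,σ}(x) = ∫ φ_σ(x-θ) dG(θ)`. -/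
noncomputable def margDens (G : Measure ℝ) (σ x : ℝ) : ℝ :=
  ∫ θ, gaussDens σ (x - θ) ∂G

/-- Posterior mean `m_{G,σ}(x) = (∫ θ φ_σ(x-θ) dG(θ)) / f_{G,σ}(x)`. -/
noncomputable def postMean (G : Measure ℝ) (σ x : ℝ) : ℝ :=
  (∫ θ, θ * gaussDens σ (x - θ) ∂G) / margDens G σ x

/-- Posterior survival probability `S_{G,σ}(s,x) = (∫_{(s,∞)} φ_σ(x-θ) dG(θ)) / f_{G,σ}(x)`. -/
noncomputable def postSurv (G : Measure ℝ) (σ s x : ℝ) : ℝ :=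
  (∫ θ in Set.Ioi s, gaussDens σ (x - θ)  ∂G) / margDens G σ x

/-- `G` has mean zero and variance bounded by `V`. -/
def MeanZeroVarLe (G : Measure ℝ) (V : ℝ) : Prop :=
  Integrable (fun θ : ℝ => θ) G ∧ Integrable (fun θ : ℝ => θ ^ 2) G ∧
    (∫ θ, θ ∂G) = 0 ∧ (∫ θ, θ ^ 2 ∂G) ≤ V

/-- The tail condition `max(1 - G((-∞,s]), G((-∞,-s])) ≤ C s^{-k}` for all `s > 0`. -/
def TailCond (G : Measure ℝ) (C k : ℝ) : Prop :=
  ∀ s : ℝ, 0 < s →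
    max (1 - (G (Set.Iic s)).toReal) ((G (Set.Iic (-s))).toReal) ≤ C * s ^ (-k)

/-- Complementary standard Gaussian CDF `Φ̄(x) = ∫_x^∞ (2π)^{-1/2} exp(-t²/2) dt`. -/
noncomputable def compPhi (x : ℝ) : ℝ :=
  ∫ t in Set.Ioi x, (Real.sqrt (2 * Real.pi))⁻¹ * Real.exp (-t ^ 2 / 2)

lemma gaussDens_eq (σ t : ℝ) :
    gaussDens σ t = (Real.sqrt (2 * π * σ ^ 2))⁻¹ * Real.exp (-((2 * σ ^ 2)⁻¹) * t ^ 2) := by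
  unfold gaussDens; congr 1; ring_nf

lemma gaussDens_nonneg (σ t : ℝ) : 0 ≤ gaussDens σ t := by
  unfold gaussDens; positivity

lemma gaussDens_pos {σ : ℝ} (hσ : 0 < σ) (t : ℝ) : 0 < gaussDens σ t := by
  unfold gaussDens
  have := Real.pi_pos
  positivity

lemma gaussDens_neg (σ t : ℝ) : gaussDens σ (-t) = gaussDens σ t := by
  unfold gaussDens; rw [neg_pow]; norm_num

lemma gaussDens_anti {σ : ℝ} (hσ : 0 < σ) {s t : ℝ} (h : |s| ≤ |t|) :
    gaussDens σ t ≤ gaussDens σ s := by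
  unfold gaussDens
  have h2 : s ^ 2 ≤ t ^ 2 := by
    rw [← sq_abs s, ← sq_abs t]; exact pow_le_pow_left₀ (abs_nonneg _) h 2
  have hd : (0:ℝ) < 2 * σ ^ 2 := by positivity
  gcongr

lemma integrable_gaussDens {σ : ℝ} (hσ : 0 < σ) : Integrable (gaussDens σ) := by
  have h : Integrable (fun t : ℝ => (Real.sqrt (2 * π * σ ^ 2))⁻¹ *
      Real.exp (-((2 * σ ^ 2)⁻¹) * t ^ 2)) :=
    (integrable_exp_neg_mul_sq (by positivity)).const_mul _
  exact h.congr (Filter.Eventually.of_forall fun t => (gaussDens_eq σ t).symm)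

lemma integrable_mul_gaussDens {σ : ℝ} (hσ : 0 < σ) :
    Integrable (fun t : ℝ => t * gaussDens σ t) := by
  have h : Integrable (fun t : ℝ => (Real.sqrt (2 * π * σ ^ 2))⁻¹ *
      (t * Real.exp (-((2 * σ ^ 2)⁻¹) * t ^ 2))) :=
    (integrable_mul_exp_neg_mul_sq (by positivity)).const_mul _
  exact h.congr (Filter.Eventually.of_forall fun t => by simp only [gaussDens_eq]; ring)

lemma integrable_sq_mul_gaussDens {σ : ℝ} (hσ : 0 < σ) :
    Integrable (fun t : ℝ => t ^ 2 * gaussDens σ t) := by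
  have h : Integrable (fun t : ℝ => (Real.sqrt (2 * π * σ ^ 2))⁻¹ *
      (t ^ (2:ℝ) * Real.exp (-((2 * σ ^ 2)⁻¹) * t ^ 2))) :=
    ((integrable_rpow_mul_exp_neg_mul_sq (by positivity) (by norm_num)).const_mul _)
  refine h.congr (Filter.Eventually.of_forall fun t => ?_)
  have ht : t ^ (2:ℝ) = t ^ (2:ℕ) := by
    rw [show (2:ℝ) = ((2:ℕ):ℝ) by norm_num, Real.rpow_natCast]
  simp only [gaussDens_eq, ht]
  norm_num
  ring

lemma integral_gaussDens {σ : ℝ} (hσ : 0 < σ) : ∫ t, gaussDens σ t = 1 := by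
  have hv : (⟨σ ^ 2, sq_nonneg σ⟩ : NNReal) ≠ 0 := by
    intro h
    have := congrArg (fun x : NNReal => (x : ℝ)) h
    change σ ^ 2 = (0:ℝ) at this
    exact (pow_ne_zero 2 hσ.ne') this
  have h : gaussDens σ = ProbabilityTheory.gaussianPDFReal 0 ⟨σ ^ 2, sq_nonneg σ⟩ := by
    funext t
    simp [gaussDens, ProbabilityTheory.gaussianPDFReal, NNReal.coe_mk]
    rfl
  rw [h]
  exact ProbabilityTheory.integral_gaussianPDFReal_eq_one 0 hv

lemma integral_mul_gaussDens {σ : ℝ} (hσ : 0 < σ) : ∫ t, t * gaussDens σ t = 0 := by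
  have h := integral_neg_eq_self (fun t : ℝ => t * gaussDens σ t) (volume : Measure ℝ)
  have h2 : ∫ t : ℝ, (-t) * gaussDens σ (-t) = ∫ t : ℝ, -(t * gaussDens σ t) := by
    congr 1; funext t; rw [gaussDens_neg]; ring
  rw [h2, integral_neg] at h
  linarith

lemma integral_sq_mul_gaussDens {σ : ℝ} (hσ : 0 < σ) : ∫ t, t ^ 2 * gaussDens σ t = σ ^ 2 := by
  have hb : (0:ℝ) < (2 * σ ^ 2)⁻¹ := by positivity
  set b : ℝ := (2 * σ ^ 2)⁻¹ with hbdef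
  have h1 : ∫ t, t ^ 2 * gaussDens σ t
      = (Real.sqrt (2 * π * σ ^ 2))⁻¹ * ∫ t : ℝ, t ^ 2 * Real.exp (-b * t ^ 2) := by
    rw [← integral_const_mul]
    congr 1; funext t; simp only [gaussDens_eq]; ring
  -- even function: reduce to Ioi 0
  have h2 : ∫ t : ℝ, t ^ 2 * Real.exp (-b * t ^ 2)
      = 2 * ∫ t in Ioi (0:ℝ), t ^ 2 * Real.exp (-b * t ^ 2) := by
    rw [← integral_comp_abs (f := fun t : ℝ => t ^ 2 * Real.exp (-b * t ^ 2))]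
    congr 1; funext t; rw [sq_abs]
  have h3 : ∫ t in Ioi (0:ℝ), t ^ 2 * Real.exp (-b * t ^ 2)
      = b ^ (-(2 + 1) / 2 : ℝ) * (1 / 2) * Real.Gamma ((2 + 1) / 2) := by
    rw [← integral_rpow_mul_exp_neg_mul_rpow (p := 2) (q := 2) (by norm_num) (by norm_num) hb]
    refine setIntegral_congr_fun measurableSet_Ioi (fun t ht => ?_)
    have ht2 : t ^ (2:ℝ) = t ^ (2:ℕ) := by
      rw [show (2:ℝ) = ((2:ℕ):ℝ) by norm_num, Real.rpow_natCast]
    rw [ht2]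
  have hGamma : Real.Gamma ((2 + 1) / 2) = Real.sqrt π / 2 := by
    have : ((2:ℝ) + 1) / 2 = 1 / 2 + 1 := by norm_num
    rw [this, Real.Gamma_add_one (by norm_num), Real.Gamma_one_half_eq]
    ring
  have hbpow : b ^ (-(2 + 1) / 2 : ℝ) = (2 * σ ^ 2) * Real.sqrt (2 * σ ^ 2) := by
    have h2σ : (0:ℝ) < 2 * σ ^ 2 := by positivity
    rw [hbdef, ← Real.rpow_neg_one (2 * σ ^ 2), ← Real.rpow_mul h2σ.le]
    have he : (-1 : ℝ) * (-(2 + 1) / 2) = 1 + 1/2 := by norm_num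
    rw [he, Real.rpow_add h2σ, Real.rpow_one, ← Real.sqrt_eq_rpow]
  rw [h1, h2, h3, hGamma, hbpow]
  have hsplit : Real.sqrt (2 * π * σ ^ 2) = Real.sqrt (2 * σ ^ 2) * Real.sqrt π := by
    rw [show 2 * π * σ ^ 2 = (2 * σ ^ 2) * π by ring, Real.sqrt_mul (by positivity)]
  rw [hsplit]
  have hs1 : Real.sqrt (2 * σ ^ 2) * Real.sqrt (2 * σ ^ 2) = 2 * σ ^ 2 :=
    Real.mul_self_sqrt (by positivity)
  have hs2 : (0:ℝ) < Real.sqrt π := Real.sqrt_pos.2 Real.pi_pos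
  have hs3 : (0:ℝ) < Real.sqrt (2 * σ ^ 2) := Real.sqrt_pos.2 (by positivity)
  field_simp

section core
variable {G : Measure ℝ} [IsProbabilityMeasure G] {σ V : ℝ}

lemma gaussDens_le_sup {σ : ℝ} (hσ : 0 < σ) (t : ℝ) :
    gaussDens σ t ≤ (Real.sqrt (2 * π * σ ^ 2))⁻¹ := by
  have h0 : gaussDens σ 0 = (Real.sqrt (2 * π * σ ^ 2))⁻¹ := by
    unfold gaussDens; norm_num
  rw [← h0]
  exact gaussDens_anti hσ (by simp)

lemma integrable_gauss_G (hσ : 0 < σ) (x : ℝ) :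
    Integrable (fun θ : ℝ => gaussDens σ (x - θ)) G := by
  refine Integrable.mono' (integrable_const ((Real.sqrt (2 * π * σ ^ 2))⁻¹)) ?_
    (Filter.Eventually.of_forall fun θ => ?_)
  · exact (Continuous.aestronglyMeasurable (by unfold gaussDens; fun_prop))
  · rw [Real.norm_eq_abs, abs_of_nonneg (gaussDens_nonneg _ _)]
    exact gaussDens_le_sup hσ _

lemma integrable_linear_gauss_G (hσ : 0 < σ) (hG : Integrable (fun θ : ℝ => θ) G) (x a b : ℝ) :
    Integrable (fun θ : ℝ => (a * θ + b) * gaussDens σ (x - θ)) G := by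
  set C := (Real.sqrt (2 * π * σ ^ 2))⁻¹ with hC
  have hC0 : 0 ≤ C := by positivity
  refine Integrable.mono' (g := fun θ => (|a| * |θ| + |b|) * C)
    (((hG.abs.const_mul _).add (integrable_const _)).mul_const _) ?_
    (Filter.Eventually.of_forall fun θ => ?_)
  · exact (Continuous.aestronglyMeasurable (by fun_prop)).mul
      (Continuous.aestronglyMeasurable (by unfold gaussDens; fun_prop))
  · rw [Real.norm_eq_abs, abs_mul, abs_of_nonneg (gaussDens_nonneg _ _)]
    have h1 : |a * θ + b| ≤ |a| * |θ| + |b| := by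
      calc |a * θ + b| ≤ |a * θ| + |b| := abs_add_le _ _
      _ = |a| * |θ| + |b| := by rw [abs_mul]
    exact mul_le_mul h1 (gaussDens_le_sup hσ _) (gaussDens_nonneg _ _)
      (by positivity)

lemma margDens_pos (hσ : 0 < σ) (x : ℝ) : 0 < margDens G σ x := by
  rw [margDens]
  rw [integral_pos_iff_support_of_nonneg_ae
    (Filter.Eventually.of_forall fun θ => gaussDens_nonneg _ _) (integrable_gauss_G hσ x)]
  have : (Function.support fun θ : ℝ => gaussDens σ (x - θ)) = univ := by
    ext θ; simp [Function.mem_support, (gaussDens_pos hσ (x - θ)).ne']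
  rw [this]
  simp
end core

section core2
variable {G : Measure ℝ} [IsProbabilityMeasure G] {σ V : ℝ}

lemma prob_toReal_split (l : ℝ) :
    (G (Ioi l)).toReal = 1 - (G (Iic l)).toReal := by
  have h := measure_add_measure_compl (μ := G) (measurableSet_Iic (a := l))
  rw [compl_Iic, measure_univ] at h
  have h2 := congrArg ENNReal.toReal h
  rw [ENNReal.toReal_add (measure_ne_top G _) (measure_ne_top G _)] at h2
  simp at h2
  linarith

lemma prob_toReal_split' (l : ℝ) :
    (G (Iio l)).toReal = 1 - (G (Ici l)).toReal := by
  have h := measure_add_measure_compl (μ := G) (measurableSet_Ici (a := l))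
  rw [compl_Ici, measure_univ] at h
  have h2 := congrArg ENNReal.toReal h
  rw [ENNReal.toReal_add (measure_ne_top G _) (measure_ne_top G _)] at h2
  simp at h2
  linarith

lemma core_upper_abs (hσ : 0 < σ) (hθ1 : Integrable (fun θ : ℝ => θ) G)
    (hθ2 : Integrable (fun θ : ℝ => θ ^ 2) G)
    (hmean : (∫ θ, θ ∂G) = 0) (hvar : (∫ θ, θ ^ 2 ∂G) ≤ V) (hV : 0 < V)
    (x c ρ : ℝ) (hρdef : ρ = c - 2 * x)
    (h2V : 2 * V ≤ ρ ^ 2) (h2V' : 2 * V ≤ c * ρ) (hρ : 0 < ρ) (hc : 0 < c) (hcx : x ≤ c) :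
    ∫ θ, (θ - c) * gaussDens σ (x - θ) ∂G ≤ 0 := by
  set κ : ℝ := gaussDens σ (x - c) with hκdef
  have hκ : 0 ≤ κ := gaussDens_nonneg _ _
  have hlρ : 2 * x - c = -ρ := by rw [hρdef]; ring
  -- pointwise bound
  have hpt : ∀ θ : ℝ, (θ - c) * gaussDens σ (x - θ)
      ≤ Set.indicator (Ioi (2 * x - c)) (fun θ => (θ - c) * κ) θ := by
    intro θ
    by_cases hθ : θ ∈ Ioi (2 * x - c)
    · rw [Set.indicator_of_mem hθ]
      rw [mem_Ioi] at hθ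
      rcases le_or_gt θ c with h1 | h1
      · refine mul_le_mul_of_nonpos_left ?_ (by linarith)
        refine gaussDens_anti hσ ?_
        rw [abs_of_nonpos (by linarith : x - c ≤ 0)]
        rw [abs_le]
        constructor <;> [linarith; linarith]
      · refine mul_le_mul_of_nonneg_left ?_ (by linarith)
        refine gaussDens_anti hσ ?_
        rw [abs_of_nonpos (by linarith : x - c ≤ 0), abs_of_nonpos (by linarith : x - θ ≤ 0)]
        linarith
    · rw [Set.indicator_of_notMem hθ]
      rw [mem_Ioi, not_lt] at hθ
      exact mul_nonpos_of_nonpos_of_nonneg (by linarith) (gaussDens_nonneg _ _)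
  -- integrate
  have hint1 : Integrable (fun θ : ℝ => (θ - c) * gaussDens σ (x - θ)) G := by
    have := integrable_linear_gauss_G (G := G) hσ hθ1 x 1 (-c)
    exact this.congr (Filter.Eventually.of_forall fun θ => by ring_nf)
  have hint2 : Integrable (Set.indicator (Ioi (2 * x - c)) (fun θ : ℝ => (θ - c) * κ)) G :=
    ((hθ1.sub (integrable_const c)).mul_const κ).indicator measurableSet_Ioi
  have hmono := integral_mono hint1 hint2 hpt
  -- compute RHS integral
  have hind : ∫ θ, Set.indicator (Ioi (2 * x - c)) (fun θ : ℝ => (θ - c) * κ) θ ∂G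
      = ((∫ θ in Ioi (2 * x - c), θ ∂G) - c * (G (Ioi (2 * x - c))).toReal) * κ := by
    rw [integral_indicator measurableSet_Ioi]
    rw [integral_mul_const]
    congr 1
    rw [integral_sub hθ1.integrableOn (integrableOn_const (measure_ne_top G _))]
    rw [setIntegral_const]
    simp [mul_comm, measureReal_def]
  -- tail bounds
  have hT1 : ∫ θ in Ioi (2 * x - c), θ ∂G ≤ V / ρ := by
    have hcompl := integral_add_compl (measurableSet_Iic (a := 2 * x - c)) hθ1
    rw [compl_Iic] at hcompl
    have hneg : -∫ θ in Iic (2 * x - c), θ ∂G ≤ ∫ θ in Iic (2 * x - c), θ ^ 2 / ρ ∂G := by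
      rw [← integral_neg]
      refine setIntegral_mono_on (hθ1.integrableOn.neg) ((hθ2.div_const ρ).integrableOn)
        measurableSet_Iic (fun θ hθ => ?_)
      rw [mem_Iic, hlρ] at hθ
      rw [le_div_iff₀ hρ]
      nlinarith
    have hle : ∫ θ in Iic (2 * x - c), θ ^ 2 / ρ ∂G ≤ V / ρ := by
      rw [integral_div]
      have h1 : ∫ θ in Iic (2 * x - c), θ ^ 2 ∂G ≤ ∫ θ, θ ^ 2 ∂G :=
        setIntegral_le_integral hθ2 (Filter.Eventually.of_forall fun θ => sq_nonneg θ)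
      have h2 : ∫ θ in Iic (2 * x - c), θ ^ 2 ∂G ≤ V := le_trans h1 hvar
      gcongr
    rw [hmean] at hcompl
    linarith
  -- Chebyshev
  have hcheb : (G (Iic (2 * x - c))).toReal ≤ V / ρ ^ 2 := by
    have hge := setIntegral_ge_of_const_le (μ := G) (c := ρ ^ 2)
      (measurableSet_Iic (a := 2 * x - c))
      (measure_ne_top G _) (fun θ hθ => ?_) hθ2.integrableOn
    · have h1 : ∫ θ in Iic (2 * x - c), θ ^ 2 ∂G ≤ V := le_trans
        (setIntegral_le_integral hθ2 (Filter.Eventually.of_forall fun θ => sq_nonneg θ)) hvar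
      rw [le_div_iff₀ (by positivity : (0:ℝ) < ρ ^ 2)]
      simp only [smul_eq_mul, measureReal_def] at hge
      nlinarith [hge]
    · rw [mem_Iic, hlρ] at hθ
      nlinarith
  -- final algebra
  have hsplit := prob_toReal_split (G := G) (2 * x - c)
  have hGnn : 0 ≤ (G (Iic (2 * x - c))).toReal := ENNReal.toReal_nonneg
  have halg : (∫ θ in Ioi (2 * x - c), θ ∂G) - c * (G (Ioi (2 * x - c))).toReal ≤ 0 := by
    rw [hsplit]
    have h1 : V / ρ ≤ c / 2 := by
      rw [div_le_div_iff₀ hρ (by norm_num)]; nlinarith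
    have h2 : V / ρ ^ 2 ≤ 1 / 2 := by
      rw [div_le_div_iff₀ (by positivity) (by norm_num)]; nlinarith
    have h3 : c * (G (Iic (2 * x - c))).toReal ≤ c * (1 / 2) :=
      mul_le_mul_of_nonneg_left (hcheb.trans h2) hc.le
    nlinarith [hT1]
  calc ∫ θ, (θ - c) * gaussDens σ (x - θ) ∂G
      ≤ ((∫ θ in Ioi (2 * x - c), θ ∂G) - c * (G (Ioi (2 * x - c))).toReal) * κ := by
        rw [← hind]; exact hmono
    _ ≤ 0 := mul_nonpos_of_nonpos_of_nonneg halg hκ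

lemma core_lower_abs (hσ : 0 < σ) (hθ1 : Integrable (fun θ : ℝ => θ) G)
    (hθ2 : Integrable (fun θ : ℝ => θ ^ 2) G)
    (hmean : (∫ θ, θ ∂G) = 0) (hvar : (∫ θ, θ ^ 2 ∂G) ≤ V) (hV : 0 < V)
    (x c ρ : ℝ) (hρdef : ρ = c + 2 * x)
    (h2V : 2 * V ≤ ρ ^ 2) (h2V' : 2 * V ≤ c * ρ) (hρ : 0 < ρ) (hc : 0 < c) (hcx : -c ≤ x) :
    0 ≤ ∫ θ, (θ + c) * gaussDens σ (x - θ) ∂G := by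
  set κ : ℝ := gaussDens σ (x + c) with hκdef
  have hκ : 0 ≤ κ := gaussDens_nonneg _ _
  have hlρ : 2 * x + c = ρ := by rw [hρdef]; ring
  have hpt : ∀ θ : ℝ, Set.indicator (Iio (2 * x + c)) (fun θ => (θ + c) * κ) θ
      ≤ (θ + c) * gaussDens σ (x - θ) := by
    intro θ
    by_cases hθ : θ ∈ Iio (2 * x + c)
    · rw [Set.indicator_of_mem hθ]
      rw [mem_Iio] at hθ
      rcases le_or_gt (-c) θ with h1 | h1
      · refine mul_le_mul_of_nonneg_left ?_ (by linarith)
        refine gaussDens_anti hσ ?_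
        rw [abs_of_nonneg (by linarith : (0:ℝ) ≤ x + c)]
        rw [abs_le]
        constructor <;> [linarith; linarith]
      · refine mul_le_mul_of_nonpos_left ?_ (by linarith)
        refine gaussDens_anti hσ ?_
        rw [abs_of_nonneg (by linarith : (0:ℝ) ≤ x + c),
          abs_of_nonneg (by linarith : (0:ℝ) ≤ x - θ)]
        linarith
    · rw [Set.indicator_of_notMem hθ]
      rw [mem_Iio, not_lt] at hθ
      exact mul_nonneg (by linarith) (gaussDens_nonneg _ _)
  have hint1 : Integrable (fun θ : ℝ => (θ + c) * gaussDens σ (x - θ)) G := by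
    have := integrable_linear_gauss_G (G := G) hσ hθ1 x 1 c
    exact this.congr (Filter.Eventually.of_forall fun θ => by ring_nf)
  have hint2 : Integrable (Set.indicator (Iio (2 * x + c)) (fun θ : ℝ => (θ + c) * κ)) G :=
    ((hθ1.add (integrable_const c)).mul_const κ).indicator measurableSet_Iio
  have hmono := integral_mono hint2 hint1 hpt
  have hind : ∫ θ, Set.indicator (Iio (2 * x + c)) (fun θ : ℝ => (θ + c) * κ) θ ∂G
      = ((∫ θ in Iio (2 * x + c), θ ∂G) + c * (G (Iio (2 * x + c))).toReal) * κ := by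
    rw [integral_indicator measurableSet_Iio]
    rw [integral_mul_const]
    congr 1
    rw [integral_add hθ1.integrableOn (integrableOn_const (measure_ne_top G _))]
    rw [setIntegral_const]
    simp [mul_comm, measureReal_def]
  have hT1 : -(V / ρ) ≤ ∫ θ in Iio (2 * x + c), θ ∂G := by
    have hcompl := integral_add_compl (measurableSet_Iio (a := 2 * x + c)) hθ1
    rw [compl_Iio] at hcompl
    have hpos : ∫ θ in Ici (2 * x + c), θ ∂G ≤ ∫ θ in Ici (2 * x + c), θ ^ 2 / ρ ∂G := by
      refine setIntegral_mono_on (hθ1.integrableOn) ((hθ2.div_const ρ).integrableOn)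
        measurableSet_Ici (fun θ hθ => ?_)
      rw [mem_Ici, hlρ] at hθ
      rw [le_div_iff₀ hρ]
      nlinarith
    have hle : ∫ θ in Ici (2 * x + c), θ ^ 2 / ρ ∂G ≤ V / ρ := by
      rw [integral_div]
      have h1 : ∫ θ in Ici (2 * x + c), θ ^ 2 ∂G ≤ ∫ θ, θ ^ 2 ∂G :=
        setIntegral_le_integral hθ2 (Filter.Eventually.of_forall fun θ => sq_nonneg θ)
      have h2 : ∫ θ in Ici (2 * x + c), θ ^ 2 ∂G ≤ V := le_trans h1 hvar
      gcongr
    rw [hmean] at hcompl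
    linarith
  have hcheb : (G (Ici (2 * x + c))).toReal ≤ V / ρ ^ 2 := by
    have hge := setIntegral_ge_of_const_le (μ := G) (c := ρ ^ 2)
      (measurableSet_Ici (a := 2 * x + c))
      (measure_ne_top G _) (fun θ hθ => ?_) hθ2.integrableOn
    · have h1 : ∫ θ in Ici (2 * x + c), θ ^ 2 ∂G ≤ V := le_trans
        (setIntegral_le_integral hθ2 (Filter.Eventually.of_forall fun θ => sq_nonneg θ)) hvar
      rw [le_div_iff₀ (by positivity : (0:ℝ) < ρ ^ 2)]
      simp only [smul_eq_mul, measureReal_def] at hge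
      nlinarith [hge]
    · rw [mem_Ici, hlρ] at hθ
      nlinarith
  have hsplit := prob_toReal_split' (G := G) (2 * x + c)
  have hGnn : 0 ≤ (G (Ici (2 * x + c))).toReal := ENNReal.toReal_nonneg
  have halg : 0 ≤ (∫ θ in Iio (2 * x + c), θ ∂G) + c * (G (Iio (2 * x + c))).toReal := by
    rw [hsplit]
    have h1 : V / ρ ≤ c / 2 := by
      rw [div_le_div_iff₀ hρ (by norm_num)]; nlinarith
    have h2 : V / ρ ^ 2 ≤ 1 / 2 := by
      rw [div_le_div_iff₀ (by positivity) (by norm_num)]; nlinarith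
    have h3 : c * (G (Ici (2 * x + c))).toReal ≤ c * (1 / 2) :=
      mul_le_mul_of_nonneg_left (hcheb.trans h2) hc.le
    nlinarith [hT1]
  calc (0:ℝ) ≤ ((∫ θ in Iio (2 * x + c), θ ∂G) + c * (G (Iio (2 * x + c))).toReal) * κ :=
        mul_nonneg halg hκ
    _ = ∫ θ, Set.indicator (Iio (2 * x + c)) (fun θ : ℝ => (θ + c) * κ) θ ∂G := hind.symm
    _ ≤ _ := hmono

end core2

section pm
variable {G : Measure ℝ} [IsProbabilityMeasure G] {σ V : ℝ}

lemma postMean_sub_bound (hσ : 0 < σ) (hG : MeanZeroVarLe G V) (x : ℝ) :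
    |postMean G σ x - x| ≤ |x| + Real.sqrt (2 * V) := by
  obtain ⟨hθ1, hθ2, hmean, hvar⟩ := hG
  have hV0 : 0 ≤ V := le_trans (integral_nonneg fun θ => sq_nonneg θ) hvar
  have hf := margDens_pos (G := G) hσ x
  have hNint : Integrable (fun θ : ℝ => θ * gaussDens σ (x - θ)) G :=
    (integrable_linear_gauss_G (G := G) hσ hθ1 x 1 0).congr
      (Filter.Eventually.of_forall fun θ => by ring_nf)
  rcases eq_or_lt_of_le hV0 with hV | hV
  · -- V = 0 : G is a point mass at 0
    have hsq0 : ∫ θ, θ ^ 2 ∂G = 0 :=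
      le_antisymm (hvar.trans_eq hV.symm) (integral_nonneg fun θ => sq_nonneg θ)
    have hae : (fun θ : ℝ => θ ^ 2) =ᵐ[G] 0 :=
      (integral_eq_zero_iff_of_nonneg (fun θ => sq_nonneg θ) hθ2).1 hsq0
    have hnum : ∫ θ, θ * gaussDens σ (x - θ) ∂G = 0 := by
      have h0 : (fun θ : ℝ => θ * gaussDens σ (x - θ)) =ᵐ[G] 0 := by
        refine hae.mono fun θ h => ?_
        simp only [Pi.zero_apply] at h ⊢
        have hθ0 : θ = 0 := by nlinarith [sq_nonneg θ]
        rw [hθ0]; ring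
      rw [integral_congr_ae h0]; simp
    rw [postMean, hnum, zero_div]
    rw [zero_sub, abs_neg]
    linarith [Real.sqrt_nonneg (2 * V)]
  · -- V > 0
    set s : ℝ := Real.sqrt (2 * V) with hsdef
    have hs : 0 < s := Real.sqrt_pos.2 (by linarith)
    have hs2 : s ^ 2 = 2 * V := Real.sq_sqrt (by linarith)
    have hmx : x ≤ max x 0 := le_max_left x 0
    have hmx0 : 0 ≤ max x 0 := le_max_right x 0
    have hmnx : -x ≤ max (-x) 0 := le_max_left (-x) 0
    have hmnx0 : 0 ≤ max (-x) 0 := le_max_right (-x) 0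
    have hmaxsum : max x 0 + max (-x) 0 = |x| := by
      rcases le_total x 0 with h | h
      · rw [max_eq_right h, max_eq_left (by linarith : (0:ℝ) ≤ -x), abs_of_nonpos h]; ring
      · rw [max_eq_left h, max_eq_right (by linarith : -x ≤ (0:ℝ)), abs_of_nonneg h]; ring
    -- upper bound
    have hub : postMean G σ x ≤ 2 * max x 0 + s := by
      set c : ℝ := 2 * max x 0 + s with hcdef
      have hρge : s ≤ c - 2 * x := by
        rcases le_total x 0 with h | h
        · rw [hcdef, max_eq_right h]; linarith
        · rw [hcdef, max_eq_left h]; linarith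
      have key := core_upper_abs (G := G) hσ hθ1 hθ2 hmean hvar hV x c (c - 2 * x) rfl
        (by nlinarith) (by nlinarith) (by linarith) (by linarith) (by linarith)
      have hsub : ∫ θ, (θ - c) * gaussDens σ (x - θ) ∂G
          = (∫ θ, θ * gaussDens σ (x - θ) ∂G) - c * margDens G σ x := by
        rw [margDens, ← integral_const_mul, ← integral_sub hNint
          ((integrable_gauss_G (G := G) hσ x).const_mul c)]
        exact integral_congr_ae (Filter.Eventually.of_forall fun θ => by ring)
      rw [postMean, div_le_iff₀ hf]
      linarith [key, hsub.symm.trans_le key]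
    -- lower bound
    have hlb : -(2 * max (-x) 0 + s) ≤ postMean G σ x := by
      set c : ℝ := 2 * max (-x) 0 + s with hcdef
      have hρge : s ≤ c + 2 * x := by
        rcases le_total x 0 with h | h
        · rw [hcdef, max_eq_left (by linarith : (0:ℝ) ≤ -x)]; linarith
        · rw [hcdef, max_eq_right (by linarith : -x ≤ (0:ℝ))]; linarith
      have key := core_lower_abs (G := G) hσ hθ1 hθ2 hmean hvar hV x c (c + 2 * x) rfl
        (by nlinarith) (by nlinarith) (by linarith) (by linarith) (by linarith)
      have hsub : ∫ θ, (θ + c) * gaussDens σ (x - θ) ∂G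
          = (∫ θ, θ * gaussDens σ (x - θ) ∂G) + c * margDens G σ x := by
        rw [margDens, ← integral_const_mul, ← integral_add hNint
          ((integrable_gauss_G (G := G) hσ x).const_mul c)]
        exact integral_congr_ae (Filter.Eventually.of_forall fun θ => by ring)
      rw [postMean, le_div_iff₀ hf]
      rw [hsub] at key
      linarith
    have hMM : max x 0 - x = max (-x) 0 := by
      rcases le_total x 0 with h | h
      · rw [max_eq_right h, max_eq_left (by linarith : (0:ℝ) ≤ -x)]; ring
      · rw [max_eq_left h, max_eq_right (by linarith : -x ≤ (0:ℝ))]; ring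
    rw [abs_le]
    constructor
    · linarith [hlb, hmaxsum, hMM]
    · linarith [hub, hmaxsum, hMM]

lemma postMean_sq_bound (hσ : 0 < σ) (hG : MeanZeroVarLe G V) (x : ℝ) :
    (postMean G σ x - x) ^ 2 ≤ 2 * x ^ 2 + 4 * V := by
  have h := postMean_sub_bound hσ hG x
  have hV0 : 0 ≤ V := le_trans (integral_nonneg fun θ => sq_nonneg θ) hG.2.2.2
  have hs2 : Real.sqrt (2 * V) ^ 2 = 2 * V := Real.sq_sqrt (by linarith)
  have h2 : (postMean G σ x - x) ^ 2 ≤ (|x| + Real.sqrt (2 * V)) ^ 2 := by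
    rw [← sq_abs (postMean G σ x - x)]
    exact pow_le_pow_left₀ (abs_nonneg _) h 2
  have h3 : (|x| + Real.sqrt (2 * V)) ^ 2 ≤ 2 * x ^ 2 + 4 * V := by
    have hax : |x| ^ 2 = x ^ 2 := sq_abs x
    nlinarith [sq_nonneg (|x| - Real.sqrt (2 * V)), Real.sqrt_nonneg (2 * V), abs_nonneg x]
  linarith

end pm

section final
variable {σ V : ℝ}

lemma inner_bound (hσ : 0 < σ) (G1 : Measure ℝ) [IsProbabilityMeasure G1]
    (hG1 : MeanZeroVarLe G1 V) (θ : ℝ) :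
    (∫ x, (postMean G1 σ x - θ) ^ 2 * gaussDens σ (x - θ))
      ≤ 4 * θ ^ 2 + 8 * V + 6 * σ ^ 2 := by
  have hV0 : 0 ≤ V := le_trans (integral_nonneg fun t => sq_nonneg t) hG1.2.2.2
  -- the dominating function
  set F : ℝ → ℝ := fun t => 6 * (t ^ 2 * gaussDens σ t) + (8 * θ) * (t * gaussDens σ t)
    + (4 * θ ^ 2 + 8 * V) * gaussDens σ t with hF
  have hFint : Integrable F :=
    (((integrable_sq_mul_gaussDens hσ).const_mul 6).add
      ((integrable_mul_gaussDens hσ).const_mul (8 * θ))).add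
      ((integrable_gaussDens hσ).const_mul _)
  have hFval : ∫ t, F t = 4 * θ ^ 2 + 8 * V + 6 * σ ^ 2 := by
    simp only [hF]
    have hfg : Integrable (fun t : ℝ => 6 * (t ^ 2 * gaussDens σ t)
        + 8 * θ * (t * gaussDens σ t)) := by
      exact ((integrable_sq_mul_gaussDens hσ).const_mul 6).add
        ((integrable_mul_gaussDens hσ).const_mul (8 * θ))
    have hg : Integrable (fun t : ℝ => (4 * θ ^ 2 + 8 * V) * gaussDens σ t) :=
      (integrable_gaussDens hσ).const_mul _
    rw [integral_add hfg hg,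
      integral_add ((integrable_sq_mul_gaussDens hσ).const_mul 6)
        ((integrable_mul_gaussDens hσ).const_mul (8 * θ)),
      integral_const_mul, integral_const_mul, integral_const_mul,
      integral_sq_mul_gaussDens hσ, integral_mul_gaussDens hσ, integral_gaussDens hσ]
    ring
  have hshift : Integrable (fun x => F (x - θ)) := hFint.comp_sub_right θ
  have hshiftval : ∫ x, F (x - θ) = 4 * θ ^ 2 + 8 * V + 6 * σ ^ 2 := by
    rw [integral_sub_right_eq_self F θ]; exact hFval
  -- pointwise bound
  have hpt : ∀ x : ℝ, (postMean G1 σ x - θ) ^ 2 * gaussDens σ (x - θ) ≤ F (x - θ) := by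
    intro x
    have hsq := postMean_sq_bound hσ hG1 x
    have hgn := gaussDens_nonneg σ (x - θ)
    have h1 : (postMean G1 σ x - θ) ^ 2 ≤ 2 * (2 * x ^ 2 + 4 * V) + 2 * (x - θ) ^ 2 := by
      nlinarith [sq_nonneg (postMean G1 σ x - x - (x - θ))]
    have h2 : (postMean G1 σ x - θ) ^ 2 * gaussDens σ (x - θ)
        ≤ (2 * (2 * x ^ 2 + 4 * V) + 2 * (x - θ) ^ 2) * gaussDens σ (x - θ) :=
      mul_le_mul_of_nonneg_right h1 hgn
    refine h2.trans (le_of_eq ?_)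
    rw [hF]
    ring
  calc (∫ x, (postMean G1 σ x - θ) ^ 2 * gaussDens σ (x - θ))
      ≤ ∫ x, F (x - θ) := by
        refine integral_mono_of_nonneg (Filter.Eventually.of_forall fun x => ?_) hshift
          (Filter.Eventually.of_forall hpt)
        exact mul_nonneg (sq_nonneg _) (gaussDens_nonneg _ _)
    _ = _ := hshiftval

theorem stmt_4' (V σ : ℝ) (hσ : 0 < σ) (G0 G1 : Measure ℝ)
    [IsProbabilityMeasure G0] [IsProbabilityMeasure G1]
    (hG0 : MeanZeroVarLe G0 V) (hG1 : MeanZeroVarLe G1 V) :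
    (∫ θ, (∫ x, (postMean G1 σ x - θ) ^ 2 * gaussDens σ (x - θ)) ∂G0)
      ≤ 14 * V + 8 * σ ^ 2 := by
  have hV0 : 0 ≤ V := le_trans (integral_nonneg fun t => sq_nonneg t) hG0.2.2.2
  have houter : (∫ θ, (∫ x, (postMean G1 σ x - θ) ^ 2 * gaussDens σ (x - θ)) ∂G0)
      ≤ ∫ θ, (4 * θ ^ 2 + (8 * V + 6 * σ ^ 2)) ∂G0 := by
    refine integral_mono_of_nonneg (Filter.Eventually.of_forall fun θ => ?_)
      ((hG0.2.1.const_mul 4).add (integrable_const (8 * V + 6 * σ ^ 2)))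
      (Filter.Eventually.of_forall fun θ =>
        (inner_bound hσ G1 hG1 θ).trans (le_of_eq (by ring)))
    exact integral_nonneg fun x => mul_nonneg (sq_nonneg _) (gaussDens_nonneg _ _)
  have hval : ∫ θ, (4 * θ ^ 2 + (8 * V + 6 * σ ^ 2)) ∂G0
      = 4 * (∫ θ, θ ^ 2 ∂G0) + (8 * V + 6 * σ ^ 2) := by
    rw [integral_add ((hG0.2.1.const_mul 4)) (integrable_const _), integral_const_mul,
      integral_const]
    simp [measure_univ]
  have : ∫ θ, (4 * θ ^ 2 + (8 * V + 6 * σ ^ 2)) ∂G0 ≤ 12 * V + 6 * σ ^ 2 := by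
    rw [hval]
    have := hG0.2.2.2
    linarith
  nlinarith [sq_nonneg σ]

end final

/-- `R(G1, σ; G0) ≤ 14V + 8σ²`. -/
theorem stmt_4 (V σ : ℝ) (hσ : 0 < σ) (G0 G1 : Measure ℝ)
    [IsProbabilityMeasure G0] [IsProbabilityMeasure G1]
    (hG0 : MeanZeroVarLe G0 V) (hG1 : MeanZeroVarLe G1 V) :
    (∫ θ, (∫ x, (postMean G1 σ x - θ) ^ 2 * gaussDens σ (x - θ)) ∂G0)
      ≤ 14 * V + 8 * σ ^ 2 := by
  exact stmt_4' V σ hσ G0 G1 hG0 hG1
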